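/- arXiv:2310.09766 — 9 statements merged into one kernel-verified Lean document; each statement's English description precedes it below -/
import Mathlib

section
/- Let X ⊆ ℝ^d be compact and let f : X → ℝ be continuous. For n ≥ 1 write X_n = {x_1,…,x_n} and D_n = {(x_i, f(x_i)) : i ≤ n}. Let W_n(·;·) map a point of X and a finite set of input–value pairs to a real number and satisfy: (1) for every x ∈ X, every sequence x_n in X and every sequence of finite sets S_n ⊆ X with inf_n Δ(x, S_n ∪ X_n) > 0, one has liminf_n W_n(x; E_f(S_n) ∪ D_n) > 0; and (2) for every convergent sequence x_n → x' in X and every sequence of finite sets S_n ⊆ X, W_n(x_n; E_f(S_{n−1}) ∪ D_{n−1}) → 0. Suppose the sequence (x_n) in X satisfies x_{n+1} ∈ argmax_{x∈X} W_n(x; D_n) for every n (maximizers assumed to exist). Then max_{i≤n} f(x_i) → sup_{x∈X} f(x) as n → ∞. -/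
open Filter Metric Topology
open scoped Classical

/-- `Efun f S` is the set of evaluated input–value pairs `{(y, f y) : y ∈ S}`. -/
noncomputable def Efun {α : Type*} (f : α → ℝ) (S : Finset α) : Finset (α × ℝ) :=
  S.image fun y => (y, f y)

/-- `Dfun f x n` is the collected data `D_n = {(x_i, f(x_i)) : 1 ≤ i ≤ n}`. -/
noncomputable def Dfun {α : Type*} (f : α → ℝ) (x : ℕ → α) (n : ℕ) : Finset (α × ℝ) :=
  (Finset.Icc 1 n).image fun i => (x i, f (x i))

/-- Algorithmic consistency of PseudoBO: if the evaluation-worthiness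
measures satisfy the generalized no-empty-ball property, `f` is continuous on the compact
set `X`, and `(x n)` maximizes `W n (·; D_n)` over `X` at every step, then the best
evaluated value `max_{i ≤ n} f (x i)` converges to `sup_{x ∈ X} f x`. -/
theorem pseudoBO_consistency {d : ℕ} (X : Set (EuclideanSpace ℝ (Fin d))) (hX : IsCompact X)
    (f : EuclideanSpace ℝ (Fin d) → ℝ) (hf : ContinuousOn f X)
    (W : ℕ → EuclideanSpace ℝ (Fin d) → Finset (EuclideanSpace ℝ (Fin d) × ℝ) → ℝ)
    (x : ℕ → EuclideanSpace ℝ (Fin d)) (hxX : ∀ n, x n ∈ X)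
    (hGNEB1 : ∀ z ∈ X, ∀ y : ℕ → EuclideanSpace ℝ (Fin d), (∀ n, y n ∈ X) →
      ∀ S : ℕ → Finset (EuclideanSpace ℝ (Fin d)),
        (∀ n, (S n : Set (EuclideanSpace ℝ (Fin d))) ⊆ X) →
      0 < ⨅ n, infDist z ((S n : Set (EuclideanSpace ℝ (Fin d))) ∪ y '' Set.Icc 1 n) →
      ∃ c > 0, ∀ᶠ n in atTop, c ≤ W n z (Efun f (S n) ∪ Dfun f y n))
    (hGNEB2 : ∀ y : ℕ → EuclideanSpace ℝ (Fin d), (∀ n, y n ∈ X) →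
      ∀ x' ∈ X, Tendsto y atTop (𝓝 x') →
      ∀ S : ℕ → Finset (EuclideanSpace ℝ (Fin d)),
        (∀ n, (S n : Set (EuclideanSpace ℝ (Fin d))) ⊆ X) →
      Tendsto (fun n => W n (y n) (Efun f (S (n - 1)) ∪ Dfun f y (n - 1))) atTop (𝓝 0))
    (hargmax : ∀ n, 1 ≤ n → ∀ z ∈ X, W n z (Dfun f x n) ≤ W n (x (n + 1)) (Dfun f x n)) :
    Tendsto (fun n => sSup (f '' (x '' Set.Icc 1 n))) atTop (𝓝 (sSup (f '' X))) := by
  classical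
  have hx1X := hxX 1
  have hXne : X.Nonempty := ⟨x 1, hx1X⟩
  set M := sSup (f '' X) with hM
  obtain ⟨xs, hxsX, hxsM⟩ := hX.exists_sSup_image_eq hXne hf
  have hbdd : BddAbove (f '' X) := (hX.image_of_continuousOn hf).bddAbove
  set b : ℕ → ℝ := fun n => sSup (f '' (x '' Set.Icc 1 n)) with hb
  have hfin : ∀ n : ℕ, (f '' (x '' Set.Icc 1 n)).Finite := fun n =>
    ((Set.finite_Icc 1 n).image x).image f
  have hne : ∀ n : ℕ, 1 ≤ n → (f '' (x '' Set.Icc 1 n)).Nonempty := fun n hn =>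
    ⟨f (x 1), ⟨x 1, ⟨1, ⟨le_refl 1, hn⟩, rfl⟩, rfl⟩⟩
  have hsub : ∀ n : ℕ, f '' (x '' Set.Icc 1 n) ⊆ f '' X := by
    rintro n w ⟨z, ⟨i, _, rfl⟩, rfl⟩
    exact ⟨x i, hxX i, rfl⟩
  have hble : ∀ n : ℕ, 1 ≤ n → b n ≤ M := fun n hn =>
    csSup_le_csSup hbdd (hne n hn) (hsub n)
  have hmono : ∀ m n : ℕ, 1 ≤ m → m ≤ n → b m ≤ b n := by
    intro m n hm hmn
    exact csSup_le_csSup (hfin n).bddAbove (hne m hm)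
      (Set.image_mono (f := f) (Set.image_mono (f := x) (Set.Icc_subset_Icc_right hmn)))
  have hfxle : ∀ i n : ℕ, 1 ≤ i → i ≤ n → f (x i) ≤ b n := by
    intro i n hi hin
    exact le_csSup (hfin n).bddAbove ⟨x i, ⟨i, ⟨hi, hin⟩, rfl⟩, rfl⟩
  have key : ∀ ε > (0 : ℝ), ∃ N : ℕ, 1 ≤ N ∧ M - ε < b N := by
    intro ε hε
    by_contra hcon
    push_neg at hcon
    have hfub : ∀ i : ℕ, 1 ≤ i → f (x i) ≤ M - ε := fun i hi =>
      (hfxle i i hi le_rfl).trans (hcon i hi)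
    have hcw : ContinuousWithinAt f X xs := hf xs hxsX
    rw [Metric.continuousWithinAt_iff] at hcw
    obtain ⟨δ, hδ0, hδ⟩ := hcw ε hε
    have hdist : ∀ i : ℕ, 1 ≤ i → δ ≤ dist (x i) xs := by
      intro i hi
      by_contra h
      push_neg at h
      have h1 := hδ (hxX i) h
      rw [Real.dist_eq] at h1
      have h2 := abs_lt.1 h1
      have := hfub i hi
      linarith [h2.1, hxsM, hM]
    obtain ⟨c, hc, hcev⟩ := hGNEB1 xs hxsX x hxX (fun _ => {x 1})
      (by intro n; simpa using hx1X)
      (by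
        refine lt_of_lt_of_le hδ0 (le_ciInf fun n => ?_)
        by_contra h
        push_neg at h
        obtain ⟨w, hw, hwd⟩ := (Metric.infDist_lt_iff (by
          refine ⟨x 1, Or.inl ?_⟩
          simp)).1 h
        rcases hw with hw | ⟨i, ⟨hi1, _⟩, rfl⟩
        · have : w = x 1 := by simpa using hw
          subst this
          have := hdist 1 le_rfl
          rw [dist_comm] at hwd
          linarith
        · have := hdist i hi1
          rw [dist_comm] at hwd
          linarith)
    have hcev' : ∀ᶠ n in atTop, c ≤ W n (x (n + 1)) (Dfun f x n) := by
      filter_upwards [hcev, eventually_ge_atTop 1] with n hn hn1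
      have hequ : Efun f ({x 1} : Finset _) ∪ Dfun f x n = Dfun f x n := by
        apply Finset.union_eq_right.mpr
        intro p hp
        have hp' : p = (x 1, f (x 1)) := by simpa [Efun] using hp
        subst hp'
        letI : DecidableEq (EuclideanSpace ℝ (Fin d)) := fun a b => Classical.propDecidable (a = b)
        exact Finset.mem_image.2 ⟨1, Finset.mem_Icc.2 ⟨le_rfl, hn1⟩, rfl⟩
      rw [hequ] at hn
      exact hn.trans (hargmax n hn1 xs hxsX)
    obtain ⟨x', hx'X, φ, hφ, hconv⟩ :=
      hX.tendsto_subseq (x := fun n => x (n + 1)) (fun n => hxX (n + 1))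
    set ψ : ℕ → ℕ := fun i => Nat.findGreatest (fun k => φ k ≤ i) i with hψdef
    set y : ℕ → EuclideanSpace ℝ (Fin d) := fun i => x (φ (ψ i) + 1) with hy
    have hyX : ∀ n, y n ∈ X := fun n => hxX _
    have hψ : Tendsto ψ atTop atTop := by
      rw [tendsto_atTop_atTop]
      intro K
      exact ⟨φ K, fun i hi =>
        Nat.le_findGreatest ((hφ.le_apply).trans hi) hi⟩
    have hyconv : Tendsto y atTop (𝓝 x') := hconv.comp hψ
    set S : ℕ → Finset (EuclideanSpace ℝ (Fin d)) :=
      fun m => (Finset.Icc 1 (m + 1)).image x with hS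
    have hSX : ∀ m, ((S m : Set (EuclideanSpace ℝ (Fin d)))) ⊆ X := by
      intro m z hz
      simp only [hS, Finset.coe_image, Set.mem_image] at hz
      obtain ⟨i, _, rfl⟩ := hz
      exact hxX i
    have htend := hGNEB2 y hyX x' hx'X hyconv S hSX
    have hψφ : ∀ k, ψ (φ k) = k := by
      intro k
      refine le_antisymm ?_ (Nat.le_findGreatest hφ.le_apply le_rfl)
      by_contra h
      push_neg at h
      have hspec : φ (ψ (φ k)) ≤ φ k :=
        Nat.findGreatest_spec (P := fun m => φ m ≤ φ k) (m := k) hφ.le_apply le_rfl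
      exact absurd (hφ h) (not_lt.2 hspec)
    have hkey : ∀ k, 1 ≤ k →
        Efun f (S (φ k - 1)) ∪ Dfun f y (φ k - 1) = Dfun f x (φ k) := by
      intro k hk
      have hn1 : 1 ≤ φ k := hk.trans hφ.le_apply
      have hE : Efun f (S (φ k - 1)) = Dfun f x (φ k) := by
        rw [hS, Efun]
        simp only [Finset.image_image]
        rw [Nat.sub_add_cancel hn1]
        rfl
      rw [hE]
      apply Finset.union_eq_left.mpr
      intro p hp
      letI : DecidableEq (EuclideanSpace ℝ (Fin d)) := fun a b => Classical.propDecidable (a = b)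
      obtain ⟨i, hi, rfl⟩ := Finset.mem_image.1 hp
      rw [Finset.mem_Icc] at hi
      have hm : φ (ψ i) + 1 ≤ φ k := by
        rcases Nat.eq_zero_or_pos (ψ i) with h0 | h0
        · rw [h0]
          have : φ 0 < φ k := hφ hk
          omega
        · have hspec : φ (ψ i) ≤ i := by
            have := Nat.findGreatest_pos (P := fun k => φ k ≤ i) (k := i)
            obtain ⟨m, _, hmi, hPm⟩ := this.1 h0
            exact Nat.findGreatest_spec (P := fun k => φ k ≤ i) hmi hPm
          omega
      exact Finset.mem_image.2 ⟨φ (ψ i) + 1, Finset.mem_Icc.2 ⟨le_add_self.trans le_rfl |>.trans (Nat.le_add_left 1 _), hm⟩, rfl⟩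
    have htend' : Tendsto
        (fun k => W (φ k) (y (φ k)) (Efun f (S (φ k - 1)) ∪ Dfun f y (φ k - 1)))
        atTop (𝓝 0) := htend.comp hφ.tendsto_atTop
    have hcev2 : ∀ᶠ k in atTop, c ≤
        W (φ k) (y (φ k)) (Efun f (S (φ k - 1)) ∪ Dfun f y (φ k - 1)) := by
      filter_upwards [hφ.tendsto_atTop.eventually hcev', eventually_ge_atTop 1] with k h hk1
      rw [hkey k hk1]
      have : y (φ k) = x (φ k + 1) := by rw [hy]; simp only; rw [hψφ k]
      rw [this]
      exact h
    have := ge_of_tendsto htend' hcev2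
    linarith
  rw [Metric.tendsto_atTop]
  intro ε hε
  obtain ⟨N, hN1, hNb⟩ := key ε hε
  refine ⟨N, fun n hn => ?_⟩
  have h1 : b n ≤ M := hble n (hN1.trans hn)
  have h2 : b N ≤ b n := hmono N n hN1 hn
  rw [Real.dist_eq, abs_lt]
  constructor <;> simp only [hb] at * <;> linarith
end

section
/- Let X ⊆ ℝ^d and let f : X → ℝ be continuous. Let f̂(·;·) be locally consistent for f, let σ̂(·;·) satisfy the GNEB property, and let g_n : ℝ × [0,∞) → ℝ satisfy: (1) g_n(p_n, q_n) → 0 whenever limsup_n p_n ≤ 0 and q_n → 0; and (2) liminf_n g_n(p_n, q_n) > 0 whenever liminf_n q_n > 0. Let ζ : ℝ → ℝ be continuous and increasing with ζ(0) ≤ 0. Define, for a point x and a finite set D of input–value pairs with label set Π_f(D) = {y : (z,y) ∈ D}, W_n(x; D) = g_n(ζ(f̂(x; D) − max Π_f(D)), σ̂(x; D)). Then W_n satisfies the GNEB property of an evaluation-worthiness measure: (1) for every x ∈ X, every sequence x_n in X and every sequence of finite sets S_n ⊆ X with inf_n Δ(x, S_n ∪ X_n) > 0, one has liminf_n W_n(x;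 E_f(S_n) ∪ D_n) > 0; and (2) for every convergent sequence x_n → x' in X and every sequence of finite sets S_n ⊆ X, W_n(x_n; E_f(S_{n−1}) ∪ D_{n−1}) → 0. -/
open Filter Metric Topology
open scoped Classical

/-- `maxLabel D` is the maximum evaluated value `max Π_f(D)` of a finite data set `D`. -/
noncomputable def maxLabel {α : Type*} (D : Finset (α × ℝ)) : ℝ :=
  sSup (Prod.snd '' (D : Set (α × ℝ)))

/-- Generalized no-empty-ball property of a (step-dependent) function of a point and a
finite data set, relative to the domain `X` and the objective `f`. -/
def GNEBW {α : Type*} [PseudoMetricSpace α] (X : Set α) (f : α → ℝ)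
    (W : ℕ → α → Finset (α × ℝ) → ℝ) : Prop :=
  (∀ z ∈ X, ∀ y : ℕ → α, (∀ n, y n ∈ X) →
    ∀ S : ℕ → Finset α, (∀ n, (S n : Set α) ⊆ X) →
    0 < ⨅ n, infDist z ((S n : Set α) ∪ y '' Set.Icc 1 n) →
    ∃ c > 0, ∀ᶠ n in atTop, c ≤ W n z (Efun f (S n) ∪ Dfun f y n)) ∧
  (∀ y : ℕ → α, (∀ n, y n ∈ X) → ∀ x' ∈ X, Tendsto y atTop (𝓝 x') →
    ∀ S : ℕ → Finset α, (∀ n, (S n : Set α) ⊆ X) →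
    Tendsto (fun n => W n (y n) (Efun f (S (n - 1)) ∪ Dfun f y (n - 1))) atTop (𝓝 0))

/-- Local consistency of a surrogate predictor relative to `X` and `f`. -/
def LocallyConsistent {α : Type*} [TopologicalSpace α] (X : Set α) (f : α → ℝ)
    (fhat : α → Finset (α × ℝ) → ℝ) : Prop :=
  ∀ y : ℕ → α, (∀ n, y n ∈ X) → ∀ x' ∈ X, Tendsto y atTop (𝓝 x') →
    ∀ S : ℕ → Finset α, (∀ n, (S n : Set α) ⊆ X) →
    Tendsto (fun n => fhat (y n) (Efun f (S (n - 1)) ∪ Dfun f y (n - 1))) atTop (𝓝 (f x'))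

/-- From SP + UQ + AF to EW: if the surrogate predictor is locally
consistent, the uncertainty quantifier has the GNEB property, the acquisition functions
`g n` have the improvement property and `ζ` is continuous increasing with `ζ 0 ≤ 0`, then
`W n x D = g n (ζ (f̂(x;D) − max Π_f(D))) (σ̂(x;D))` satisfies the GNEB property. -/
theorem sp_uq_af_to_ew {d : ℕ} (X : Set (EuclideanSpace ℝ (Fin d)))
    (f : EuclideanSpace ℝ (Fin d) → ℝ) (hf : ContinuousOn f X)
    (fhat σhat : EuclideanSpace ℝ (Fin d) → Finset (EuclideanSpace ℝ (Fin d) × ℝ) → ℝ)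
    (hσnonneg : ∀ z D, 0 ≤ σhat z D)
    (hLC : LocallyConsistent X f fhat)
    (hUQ : GNEBW X f (fun _ => σhat))
    (g : ℕ → ℝ → ℝ → ℝ)
    (hAF1 : ∀ p q : ℕ → ℝ, (∀ n, 0 ≤ q n) → (∀ ε > 0, ∀ᶠ n in atTop, p n ≤ ε) →
      Tendsto q atTop (𝓝 0) → Tendsto (fun n => g n (p n) (q n)) atTop (𝓝 0))
    (hAF2 : ∀ p q : ℕ → ℝ, (∀ n, 0 ≤ q n) → (∃ c > 0, ∀ᶠ n in atTop, c ≤ q n) →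
      ∃ c > 0, ∀ᶠ n in atTop, c ≤ g n (p n) (q n))
    (ζ : ℝ → ℝ) (hζc : Continuous ζ) (hζm : StrictMono ζ) (hζ0 : ζ 0 ≤ 0) :
    GNEBW X f (fun n z D => g n (ζ (fhat z D - maxLabel D)) (σhat z D)) := by
  constructor
  · intro z hz y hy S hS hinf
    exact hAF2 _ _ (fun n => hσnonneg _ _) (hUQ.1 z hz y hy S hS hinf)
  · intro y hy x' hx' hyx S hS
    have hq := hUQ.2 y hy x' hx' hyx S hS
    refine hAF1 _ _ (fun n => hσnonneg _ _) ?_ hq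
    intro ε hε
    obtain ⟨δ, hδpos, hζδ⟩ : ∃ δ > 0, ζ δ ≤ ε := by
      have h1 : ∀ᶠ t in 𝓝 (0 : ℝ), ζ t < ε :=
        (hζc.tendsto 0).eventually (gt_mem_nhds (lt_of_le_of_lt hζ0 hε))
      rw [Metric.eventually_nhds_iff] at h1
      obtain ⟨δ, hδ, h⟩ := h1
      exact ⟨δ / 2, by positivity, le_of_lt (h (by rw [Real.dist_eq, sub_zero, abs_of_pos (by positivity)]; linarith))⟩
    have hy' : Tendsto (fun n => y (n - 1)) atTop (𝓝[X] x') := by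
      rw [tendsto_nhdsWithin_iff]
      exact ⟨hyx.comp (tendsto_sub_atTop_nat 1), Eventually.of_forall fun n => hy _⟩
    have hfy : Tendsto (fun n => f (y (n - 1))) atTop (𝓝 (f x')) :=
      (hf x' hx').tendsto.comp hy'
    have hfh := hLC y hy x' hx' hyx S hS
    have hdiff : Tendsto
        (fun n => fhat (y n) (Efun f (S (n - 1)) ∪ Dfun f y (n - 1)) - f (y (n - 1)))
        atTop (𝓝 0) := by
      have := hfh.sub hfy
      rw [sub_self] at this
      convert this
    have hsmall : ∀ᶠ n in atTop,
        fhat (y n) (Efun f (S (n - 1)) ∪ Dfun f y (n - 1)) - f (y (n - 1)) < δ :=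
      hdiff.eventually (gt_mem_nhds hδpos)
    filter_upwards [hsmall, eventually_ge_atTop 2] with n hn hn2
    set D := Efun f (S (n - 1)) ∪ Dfun f y (n - 1) with hD
    have hmem : f (y (n - 1)) ∈ Prod.snd '' (↑D : Set (EuclideanSpace ℝ (Fin d) × ℝ)) := by
      refine ⟨(y (n - 1), f (y (n - 1))), ?_, rfl⟩
      simp only [hD, Finset.coe_union, Set.mem_union, Finset.mem_coe]
      right
      simp only [Dfun, Finset.mem_image]
      exact ⟨n - 1, Finset.mem_Icc.2 ⟨by omega, le_refl _⟩, rfl⟩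
    have hbdd : BddAbove (Prod.snd '' (↑D : Set (EuclideanSpace ℝ (Fin d) × ℝ))) :=
      (D.finite_toSet.image _).bddAbove
    have hle : f (y (n - 1)) ≤ maxLabel D := le_csSup hbdd hmem
    have hkey : fhat (y n) D - maxLabel D ≤ δ := by linarith
    refine le_trans (le_of_eq ?_) ((hζm.monotone hkey).trans hζδ)
    congr!
end

section
/- Let X ⊆ ℝ^d be compact and let f : X → ℝ be continuous. Let f̂(·;·) be locally consistent for f, let σ̂(·;·) satisfy the GNEB property, let g_n : ℝ × [0,∞) → ℝ satisfy the improvement property, and let ζ : ℝ → ℝ be continuous and increasing with ζ(0) ≤ 0. Suppose the sequence (x_n) in X satisfies x_{n+1} ∈ argmax_{x∈X} g_n(ζ(f̂(x; D_n) − max Π_f(D_n)), σ̂(x; D_n)) for every n (maximizers assumed to exist), where D_n = {(x_i, f(x_i)) : i ≤ n} and Π_f(D_n) = {f(x_i) : i ≤ n}. Then max_{i≤n} f(x_i) → sup_{x∈X} f(x) as n → ∞. -/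
open Filter Metric Topology
open scoped Classical

/-- Algorithmic consistency via SP + UQ + AF: with a locally consistent
surrogate predictor, a GNEB uncertainty quantifier, acquisition functions with the
improvement property, and `ζ` continuous increasing with `ζ 0 ≤ 0`, the PseudoBO sequence
maximizing `g n (ζ (f̂(x;D_n) − max Π_f(D_n))) (σ̂(x;D_n))` over the compact set `X`
satisfies `max_{i ≤ n} f (x i) → sup_{x ∈ X} f x`. -/
theorem pseudoBO_consistency_via_sp_uq_af {d : ℕ}
    (X : Set (EuclideanSpace ℝ (Fin d))) (hX : IsCompact X)
    (f : EuclideanSpace ℝ (Fin d) → ℝ) (hf : ContinuousOn f X)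
    (fhat σhat : EuclideanSpace ℝ (Fin d) → Finset (EuclideanSpace ℝ (Fin d) × ℝ) → ℝ)
    (hσnonneg : ∀ z D, 0 ≤ σhat z D)
    (hLC : LocallyConsistent X f fhat)
    (hUQ : GNEBW X f (fun _ => σhat))
    (g : ℕ → ℝ → ℝ → ℝ)
    (hAF1 : ∀ p q : ℕ → ℝ, (∀ n, 0 ≤ q n) → (∀ ε > 0, ∀ᶠ n in atTop, p n ≤ ε) →
      Tendsto q atTop (𝓝 0) → Tendsto (fun n => g n (p n) (q n)) atTop (𝓝 0))
    (hAF2 : ∀ p q : ℕ → ℝ, (∀ n, 0 ≤ q n) → (∃ c > 0, ∀ᶠ n in atTop, c ≤ q n) →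
      ∃ c > 0, ∀ᶠ n in atTop, c ≤ g n (p n) (q n))
    (ζ : ℝ → ℝ) (hζc : Continuous ζ) (hζm : StrictMono ζ) (hζ0 : ζ 0 ≤ 0)
    (x : ℕ → EuclideanSpace ℝ (Fin d)) (hxX : ∀ n, x n ∈ X)
    (hargmax : ∀ n, 1 ≤ n → ∀ z ∈ X,
      g n (ζ (fhat z (Dfun f x n) - maxLabel (Dfun f x n))) (σhat z (Dfun f x n)) ≤
      g n (ζ (fhat (x (n + 1)) (Dfun f x n) - maxLabel (Dfun f x n)))
        (σhat (x (n + 1)) (Dfun f x n))) :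
    Tendsto (fun n => sSup (f '' (x '' Set.Icc 1 n))) atTop (𝓝 (sSup (f '' X))) := by
  classical
  have hXne : X.Nonempty := ⟨x 1, hxX 1⟩
  have himg : IsCompact (f '' X) := hX.image_of_continuousOn hf
  have hbddX : BddAbove (f '' X) := himg.bddAbove
  set M : ℕ → ℝ := fun n => sSup (f '' (x '' Set.Icc 1 n)) with hMdef
  have hsub : ∀ n : ℕ, f '' (x '' Set.Icc 1 n) ⊆ f '' X := by
    rintro n v ⟨u, ⟨i, hi, rfl⟩, rfl⟩
    exact ⟨x i, hxX i, rfl⟩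
  have hbddM : ∀ n : ℕ, BddAbove (f '' (x '' Set.Icc 1 n)) :=
    fun n => hbddX.mono (hsub n)
  have hmemM : ∀ i n : ℕ, 1 ≤ i → i ≤ n → f (x i) ∈ f '' (x '' Set.Icc 1 n) :=
    fun i n h1 h2 => ⟨x i, ⟨i, ⟨h1, h2⟩, rfl⟩, rfl⟩
  have hneM : ∀ n : ℕ, 1 ≤ n → (f '' (x '' Set.Icc 1 n)).Nonempty :=
    fun n hn => ⟨f (x 1), hmemM 1 n le_rfl hn⟩
  have hfxM : ∀ i n : ℕ, 1 ≤ i → i ≤ n → f (x i) ≤ M n :=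
    fun i n h1 h2 => le_csSup (hbddM n) (hmemM i n h1 h2)
  have hmono : Monotone fun n => M (n + 1) := by
    intro a b hab
    exact csSup_le_csSup (hbddM (b + 1)) (hneM (a + 1) (Nat.le_add_left 1 a))
      (Set.image_mono (Set.image_mono (Set.Icc_subset_Icc_right (by omega))))
  have hMleSup : ∀ n : ℕ, 1 ≤ n → M n ≤ sSup (f '' X) :=
    fun n hn => csSup_le_csSup hbddX (hneM n hn) (hsub n)
  have hbddR : BddAbove (Set.range fun n => M (n + 1)) := by
    refine ⟨sSup (f '' X), ?_⟩
    rintro v ⟨n, rfl⟩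
    exact hMleSup (n + 1) (Nat.le_add_left 1 n)
  set L : ℝ := ⨆ n, M (n + 1) with hLdef
  have hML : Tendsto (fun n => M (n + 1)) atTop (𝓝 L) := tendsto_atTop_ciSup hmono hbddR
  have hMtend : Tendsto M atTop (𝓝 L) := (tendsto_add_atTop_iff_nat 1).mp hML
  have hMnle : ∀ n : ℕ, 1 ≤ n → M n ≤ L := by
    intro n hn
    obtain ⟨m, rfl⟩ := Nat.exists_eq_add_of_le hn
    have := le_ciSup hbddR m
    simpa [Nat.add_comm] using this
  have hLle : L ≤ sSup (f '' X) :=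
    ciSup_le fun n => hMleSup (n + 1) (Nat.le_add_left 1 n)
  have key : sSup (f '' X) ≤ L := by
    by_contra hlt
    push_neg at hlt
    obtain ⟨xs, hxs, hmax⟩ := hX.exists_isMaxOn hXne hf
    have hfxsSup : sSup (f '' X) ≤ f xs := by
      apply csSup_le (hXne.image f)
      rintro v ⟨u, hu, rfl⟩
      exact hmax hu
    have hfxs : L < f xs := lt_of_lt_of_le hlt hfxsSup
    by_cases hA : ∀ ε > (0:ℝ), ∃ n, 1 ≤ n ∧ dist (x n) xs < ε
    · -- xs is approached by the sequence: contradiction with L < f xs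
      have hc : ContinuousWithinAt f X xs := hf xs hxs
      obtain ⟨δ, hδ, hδ'⟩ := Metric.continuousWithinAt_iff.mp hc ((f xs - L) / 2)
        (by linarith)
      obtain ⟨n, hn1, hnd⟩ := hA δ hδ
      have h1 : dist (f (x n)) (f xs) < (f xs - L) / 2 := hδ' (hxX n) hnd
      have h2 : f (x n) ≤ L := le_trans (hfxM n n hn1 le_rfl) (hMnle n hn1)
      rw [Real.dist_eq] at h1
      have := abs_lt.mp h1
      linarith [this.1]
    · -- xs is never approached: GNEB + improvement property give a contradiction
      push_neg at hA
      obtain ⟨ε, hε, hεd⟩ := hA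
      -- GNEB part 1 at xs with constant extra set {x 1}
      have hS1sub : ∀ n : ℕ, ((({x 1} : Finset (EuclideanSpace ℝ (Fin d))) : Set _) ⊆ X) := by
        intro n z hz
        rw [Finset.coe_singleton, Set.mem_singleton_iff] at hz
        subst hz; exact hxX 1
      have hinf : 0 < ⨅ n : ℕ,
          infDist xs ((({x 1} : Finset (EuclideanSpace ℝ (Fin d))) : Set _) ∪
            x '' Set.Icc 1 n) := by
        have hlow : ∀ n : ℕ, ε ≤ infDist xs
            ((({x 1} : Finset (EuclideanSpace ℝ (Fin d))) : Set _) ∪ x '' Set.Icc 1 n) := by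
          intro n
          set s : Set (EuclideanSpace ℝ (Fin d)) :=
            (({x 1} : Finset (EuclideanSpace ℝ (Fin d))) : Set _) ∪ x '' Set.Icc 1 n with hs
          have hsn : s.Nonempty := ⟨x 1, Or.inl (by simp)⟩
          by_contra hcon
          push_neg at hcon
          obtain ⟨y, hy, hyd⟩ := (Metric.infDist_lt_iff hsn).mp hcon
          have : ∃ i : ℕ, 1 ≤ i ∧ y = x i := by
            rcases hy with hy | hy
            · rw [Finset.coe_singleton, Set.mem_singleton_iff] at hy
              exact ⟨1, le_rfl, hy⟩
            · obtain ⟨i, hi, rfl⟩ := hy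
              exact ⟨i, hi.1, rfl⟩
          obtain ⟨i, hi1, rfl⟩ := this
          have := hεd i hi1
          rw [dist_comm] at hyd
          linarith
        exact lt_of_lt_of_le hε (le_ciInf hlow)
      obtain ⟨c, hc, hcev⟩ := hUQ.1 xs hxs x hxX (fun _ => ({x 1} : Finset _)) hS1sub hinf
      -- identify the data set
      have hEfS : ∀ n : ℕ, 1 ≤ n →
          Efun f ({x 1} : Finset (EuclideanSpace ℝ (Fin d))) ∪ Dfun f x n = Dfun f x n := by
        intro n hn
        apply Finset.union_eq_right.mpr
        intro p hp
        simp only [Efun, Finset.image_singleton, Finset.mem_singleton] at hp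
        subst hp
        simp only [Dfun, Finset.mem_image, Finset.mem_Icc]
        exact ⟨1, ⟨le_rfl, hn⟩, rfl⟩
      have hcev' : ∀ᶠ n in atTop, c ≤ σhat xs (Dfun f x n) := by
        filter_upwards [hcev, eventually_ge_atTop 1] with n h1 h2
        convert h1 using 2
        convert (hEfS n h2).symm
      -- improvement property part 2
      obtain ⟨c', hc', hc'ev⟩ := hAF2
        (fun n => ζ (fhat xs (Dfun f x n) - maxLabel (Dfun f x n)))
        (fun n => σhat xs (Dfun f x n)) (fun n => hσnonneg _ _) ⟨c, hc, hcev'⟩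
      set P : ℕ → ℝ := fun n => ζ (fhat (x (n + 1)) (Dfun f x n) - maxLabel (Dfun f x n))
        with hPdef
      set Q : ℕ → ℝ := fun n => σhat (x (n + 1)) (Dfun f x n) with hQdef
      have hGev : ∀ᶠ n in atTop, c' ≤ g n (P n) (Q n) := by
        filter_upwards [hc'ev, eventually_ge_atTop 1] with n h1 h2
        exact le_trans h1 (hargmax n h2 xs hxs)
      -- convergent subsequence of the proposed points
      obtain ⟨x', hx', φ, hφ, hconv⟩ := hX.tendsto_subseq (x := fun n => x (n + 1))
        (fun n => hxX (n + 1))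
      set y : ℕ → EuclideanSpace ℝ (Fin d) := fun k => x (φ k + 1) with hydef
      have hyX : ∀ k, y k ∈ X := fun k => hxX _
      have hyconv : Tendsto y atTop (𝓝 x') := hconv
      set S' : ℕ → Finset (EuclideanSpace ℝ (Fin d)) :=
        fun m => (Finset.Icc 1 (φ (m + 1))).image x with hS'def
      have hS'sub : ∀ m : ℕ, ((S' m : Set _) ⊆ X) := by
        intro m z hz
        rw [hS'def, Finset.coe_image] at hz
        obtain ⟨i, _, rfl⟩ := hz
        exact hxX i
      have hkey : ∀ k : ℕ, 1 ≤ k →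
          Efun f (S' (k - 1)) ∪ Dfun f y (k - 1) = Dfun f x (φ k) := by
        intro k hk
        have hk1 : k - 1 + 1 = k := Nat.succ_pred_eq_of_pos hk
        have hE : Efun f (S' (k - 1)) = Dfun f x (φ k) := by
          ext p
          simp [hS'def, Efun, Dfun, hk1, hk]
        rw [hE]
        apply Finset.union_eq_left.mpr
        intro p hp
        simp only [Dfun, Finset.mem_image, Finset.mem_Icc] at hp ⊢
        obtain ⟨i, ⟨hi1, hi2⟩, rfl⟩ := hp
        refine ⟨φ i + 1, ⟨Nat.le_add_left 1 _, ?_⟩, rfl⟩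
        have h1 : φ i + 1 ≤ φ (i + 1) := Nat.succ_le_of_lt (hφ (Nat.lt_succ_self i))
        have h2 : φ (i + 1) ≤ φ k := hφ.monotone (by omega)
        omega
      -- maxLabel identification
      have hmaxL : ∀ n : ℕ, maxLabel (Dfun f x n) = M n := by
        intro n
        unfold maxLabel Dfun
        rw [hMdef]
        congr 1
        ext v
        simp
      -- limits along the subsequence
      have hfhat : Tendsto (fun k => fhat (y k) (Dfun f x (φ k))) atTop (𝓝 (f x')) := by
        have h0 := hLC y hyX x' hx' hyconv S' hS'sub
        apply h0.congr'
        filter_upwards [eventually_ge_atTop 1] with k hk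
        congr 1
        convert hkey k hk
      have hσ0 : Tendsto (fun k => σhat (y k) (Dfun f x (φ k))) atTop (𝓝 0) := by
        have h0 := hUQ.2 y hyX x' hx' hyconv S' hS'sub
        apply h0.congr'
        filter_upwards [eventually_ge_atTop 1] with k hk
        congr 1
        convert hkey k hk
      have hMφ : Tendsto (fun k => M (φ k)) atTop (𝓝 L) :=
        hMtend.comp hφ.tendsto_atTop
      have hfy : Tendsto (fun k => f (y k)) atTop (𝓝 (f x')) := by
        have hyin : Tendsto y atTop (𝓝[X] x') :=
          tendsto_nhdsWithin_iff.mpr ⟨hyconv, Eventually.of_forall hyX⟩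
        exact (hf x' hx').tendsto.comp hyin
      have hfx'L : f x' ≤ L := by
        refine le_of_tendsto hfy (Eventually.of_forall fun k => ?_)
        exact le_trans (hfxM (φ k + 1) (φ k + 1) (Nat.le_add_left 1 _) le_rfl)
          (hMnle (φ k + 1) (Nat.le_add_left 1 _))
      have hPφ : Tendsto (fun k => P (φ k)) atTop (𝓝 (ζ (f x' - L))) := by
        have hinner : Tendsto (fun k => fhat (y k) (Dfun f x (φ k)) - M (φ k)) atTop
            (𝓝 (f x' - L)) := hfhat.sub hMφ
        have := (hζc.tendsto (f x' - L)).comp hinner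
        apply this.congr
        intro k
        simp only [hPdef, Function.comp, hmaxL, hydef]
      have hζle : ζ (f x' - L) ≤ 0 :=
        le_trans (hζm.monotone (by linarith)) hζ0
      -- build full-index sequences for hAF1
      set p : ℕ → ℝ := fun n => if n ∈ Set.range φ then P n else (-1) with hpdef
      set q : ℕ → ℝ := fun n => if n ∈ Set.range φ then Q n else 0 with hqdef
      have hq0 : ∀ n, 0 ≤ q n := by
        intro n
        simp only [hqdef]
        by_cases h : n ∈ Set.range φ
        · rw [if_pos h]; exact hσnonneg _ _
        · rw [if_neg h]
      have hpev : ∀ ε' > (0:ℝ), ∀ᶠ n in atTop, p n ≤ ε' := by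
        intro ε' hε'
        have hPev : ∀ᶠ k in atTop, P (φ k) < ε' := by
          apply hPφ.eventually_lt_const
          linarith
        obtain ⟨K, hK⟩ := eventually_atTop.mp hPev
        refine eventually_atTop.mpr ⟨φ K, fun n hn => ?_⟩
        simp only [hpdef]
        by_cases h : n ∈ Set.range φ
        · obtain ⟨k, rfl⟩ := h
          rw [if_pos (Set.mem_range_self k)]
          exact (hK k (hφ.le_iff_le.mp hn)).le
        · rw [if_neg h]; linarith
      have hqt : Tendsto q atTop (𝓝 0) := by
        rw [Metric.tendsto_atTop]
        intro ε' hε'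
        obtain ⟨K, hK⟩ := Metric.tendsto_atTop.mp hσ0 ε' hε'
        refine ⟨φ K, fun n hn => ?_⟩
        simp only [hqdef]
        by_cases h : n ∈ Set.range φ
        · obtain ⟨k, rfl⟩ := h
          simp only [if_pos (Set.mem_range_self k)]
          exact hK k (hφ.le_iff_le.mp hn)
        · rw [if_neg h]
          simpa using hε'
      have hg0 : Tendsto (fun n => g n (p n) (q n)) atTop (𝓝 0) := hAF1 p q hq0 hpev hqt
      have hgφ : Tendsto (fun k => g (φ k) (P (φ k)) (Q (φ k))) atTop (𝓝 0) := by
        have := hg0.comp hφ.tendsto_atTop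
        apply this.congr
        intro k
        simp only [Function.comp, hpdef, hqdef, if_pos (Set.mem_range_self k)]
      have hGevφ : ∀ᶠ k in atTop, c' ≤ g (φ k) (P (φ k)) (Q (φ k)) := by
        obtain ⟨N, hN⟩ := eventually_atTop.mp hGev
        exact eventually_atTop.mpr ⟨N, fun k hk => hN (φ k) (le_trans hk hφ.le_apply)⟩
      have : c' ≤ 0 := ge_of_tendsto hgφ hGevφ
      linarith
  have hLeq : L = sSup (f '' X) := le_antisymm hLle key
  rw [← hLeq]
  exact hMtend
end

section
/- Let X ⊆ ℝ^d and let f : X → ℝ be continuous. Let (x_n) be a sequence in X converging to x' ∈ X, and let (S_n) be a sequence of finite subsets of X. For each n ≥ 2, let z_n be a nearest point of S_{n−1} ∪ {x_1,…,x_{n−1}} to x_n, i.e., z_n ∈ argmin_{y ∈ S_{n−1} ∪ {x_1,…,x_{n−1}}} ‖x_n − y‖. Then f(z_n) → f(x') as n → ∞; that is, the nearest-neighbour surrogate predictor is locally consistent for f. -/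
open Filter Metric Topology
open scoped Classical

/-- Local consistency of the nearest-neighbour surrogate predictor:
if `x n → x'` in `X`, `f` is continuous on `X`, and `z n` is a nearest point of
`S_{n−1} ∪ {x_1,…,x_{n−1}}` to `x n`, then `f (z n) → f x'`. -/
theorem nearest_neighbour_locally_consistent {d : ℕ}
    (X : Set (EuclideanSpace ℝ (Fin d)))
    (f : EuclideanSpace ℝ (Fin d) → ℝ) (hf : ContinuousOn f X)
    (x : ℕ → EuclideanSpace ℝ (Fin d)) (hxX : ∀ n, x n ∈ X)
    (x' : EuclideanSpace ℝ (Fin d)) (hx' : x' ∈ X)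
    (hconv : Tendsto x atTop (𝓝 x'))
    (S : ℕ → Finset (EuclideanSpace ℝ (Fin d)))
    (hS : ∀ n, (S n : Set (EuclideanSpace ℝ (Fin d))) ⊆ X)
    (z : ℕ → EuclideanSpace ℝ (Fin d))
    (hzmem : ∀ n, 2 ≤ n →
      z n ∈ (S (n - 1) : Set (EuclideanSpace ℝ (Fin d))) ∪ x '' Set.Icc 1 (n - 1))
    (hznear : ∀ n, 2 ≤ n →
      ∀ y ∈ (S (n - 1) : Set (EuclideanSpace ℝ (Fin d))) ∪ x '' Set.Icc 1 (n - 1),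
        ‖x n - z n‖ ≤ ‖x n - y‖) :
    Tendsto (fun n => f (z n)) atTop (𝓝 (f x')) := by
  have hd1 : Tendsto (fun n => dist (x n) x') atTop (𝓝 0) :=
    tendsto_iff_dist_tendsto_zero.mp hconv
  have hd2 : Tendsto (fun n => dist (x (n - 1)) x') atTop (𝓝 0) :=
    hd1.comp (tendsto_sub_atTop_nat 1)
  have hbound : ∀ n, 2 ≤ n →
      dist (z n) x' ≤ dist (x n) x' + (dist (x n) x' + dist (x (n - 1)) x') := by
    intro n hn
    have hmem : x (n - 1) ∈ (S (n - 1) : Set (EuclideanSpace ℝ (Fin d)))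
        ∪ x '' Set.Icc 1 (n - 1) :=
      Or.inr ⟨n - 1, ⟨by omega, le_refl _⟩, rfl⟩
    have h1 : dist (x n) (z n) ≤ dist (x n) (x (n - 1)) := by
      have := hznear n hn _ hmem
      simpa [dist_eq_norm] using this
    calc dist (z n) x' ≤ dist (z n) (x n) + dist (x n) x' := dist_triangle _ _ _
      _ = dist (x n) (z n) + dist (x n) x' := by rw [dist_comm]
      _ ≤ dist (x n) (x (n - 1)) + dist (x n) x' := by linarith
      _ ≤ (dist (x n) x' + dist x' (x (n - 1))) + dist (x n) x' :=
          add_le_add_left (dist_triangle _ _ _) _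
      _ = dist (x n) x' + (dist (x n) x' + dist (x (n - 1)) x') := by
          rw [dist_comm x' (x (n-1))]; ring
  have hztend : Tendsto z atTop (𝓝 x') := by
    rw [tendsto_iff_dist_tendsto_zero]
    have hlim : Tendsto (fun n => dist (x n) x' + (dist (x n) x' + dist (x (n - 1)) x'))
        atTop (𝓝 0) := by
      have := hd1.add (hd1.add hd2)
      simpa using this
    refine squeeze_zero' ?_ ?_ hlim
    · exact Eventually.of_forall fun n => dist_nonneg
    · filter_upwards [eventually_ge_atTop 2] with n hn using hbound n hn
  have hzX : ∀ᶠ n in atTop, z n ∈ X := by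
    filter_upwards [eventually_ge_atTop 2] with n hn
    rcases hzmem n hn with h | ⟨k, _, hk⟩
    · exact hS _ h
    · exact hk ▸ hxX k
  exact ((hf x' hx').tendsto).comp
    (tendsto_nhdsWithin_of_tendsto_nhds_of_eventually_within _ hztend hzX)
end

section
/- Let X ⊆ ℝ^d, let f : X → ℝ be continuous, and let K : ℝ^d → [0,∞) be a kernel with K(z) = 0 for ‖z‖ > 1 and K(z) > 0 for ‖z‖ ≤ θ, for some fixed θ ∈ (0,1). For bandwidth h > 0 set K_h(x,y) = K((x−y)/h). Given a finite set P ⊆ X and bandwidth h, define the kernel regression estimator f̂(x; P, h) = (Σ_{y∈P} K_h(x,y) f(y)) / (Σ_{y∈P} K_h(x,y)) whenever Σ_{y∈P} K_h(x,y) > 0, and f̂(x; P, h) = 0 otherwise. Let (x_n) be a sequence in X converging to x' ∈ X, let (S_n) be a sequence of finite subsets of X, set P_{n} = S_{n} ∪ {x_1,…,x_{n}}, and let the bandwidths h_n > 0 satisfy h_n → 0 and Δ(x_n, P_{n−1}) ≤ θ·h_{n−1} for all large n, where Δ(x,S) = min_{y∈S} ‖x−y‖. Then Σ_{y∈P_{n−1}}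 K_{h_{n−1}}(x_n,y) > 0 for all large n, and f̂(x_n; P_{n−1}, h_{n−1}) → f(x') as n → ∞; that is, the kernel regression surrogate predictor with these bandwidths is locally consistent for f. -/
open Filter Metric Topology
open scoped Classical

/-- `Pn S x n = S_n ∪ {x_1,…,x_n}` is the data-point set at step `n`. -/
noncomputable def Pn {α : Type*} (S : ℕ → Finset α) (x : ℕ → α) (n : ℕ) : Finset α :=
  S n ∪ (Finset.Icc 1 n).image x

/-- `ksum K x P h = Σ_{y∈P} K((x−y)/h)` is the total kernel weight. -/
noncomputable def ksum {d : ℕ} (K : EuclideanSpace ℝ (Fin d) → ℝ)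
    (x : EuclideanSpace ℝ (Fin d)) (P : Finset (EuclideanSpace ℝ (Fin d))) (h : ℝ) : ℝ :=
  ∑ y ∈ P, K (h⁻¹ • (x - y))

/-- Kernel regression estimator: weighted average of observed values, and `0` when the
total kernel weight vanishes. -/
noncomputable def kreg {d : ℕ} (f K : EuclideanSpace ℝ (Fin d) → ℝ)
    (x : EuclideanSpace ℝ (Fin d)) (P : Finset (EuclideanSpace ℝ (Fin d))) (h : ℝ) : ℝ :=
  if 0 < ksum K x P h then (∑ y ∈ P, K (h⁻¹ • (x - y)) * f y) / ksum K x P h else 0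

/-- Local consistency of kernel regression with a compactly supported
kernel that is positive on the ball of radius `θ`, with bandwidths `h n → 0` satisfying
`Δ(x_n, P_{n−1}) ≤ θ·h_{n−1}` eventually. -/
theorem kernel_regression_locally_consistent {d : ℕ}
    (X : Set (EuclideanSpace ℝ (Fin d)))
    (f : EuclideanSpace ℝ (Fin d) → ℝ) (hf : ContinuousOn f X)
    (θ : ℝ) (hθ : θ ∈ Set.Ioo (0 : ℝ) 1)
    (K : EuclideanSpace ℝ (Fin d) → ℝ)
    (hKnonneg : ∀ z, 0 ≤ K z)
    (hKzero : ∀ z, 1 < ‖z‖ → K z = 0)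
    (hKpos : ∀ z, ‖z‖ ≤ θ → 0 < K z)
    (x : ℕ → EuclideanSpace ℝ (Fin d)) (hxX : ∀ n, x n ∈ X)
    (x' : EuclideanSpace ℝ (Fin d)) (hx' : x' ∈ X)
    (hconv : Tendsto x atTop (𝓝 x'))
    (S : ℕ → Finset (EuclideanSpace ℝ (Fin d)))
    (hS : ∀ n, (S n : Set (EuclideanSpace ℝ (Fin d))) ⊆ X)
    (h : ℕ → ℝ) (hpos : ∀ n, 0 < h n) (hh0 : Tendsto h atTop (𝓝 0))
    (hband : ∀ᶠ n in atTop,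
      infDist (x n) ((Pn S x (n - 1) : Finset (EuclideanSpace ℝ (Fin d))) : Set _) ≤
        θ * h (n - 1)) :
    (∀ᶠ n in atTop, 0 < ksum K (x n) (Pn S x (n - 1)) (h (n - 1))) ∧
    Tendsto (fun n => kreg f K (x n) (Pn S x (n - 1)) (h (n - 1))) atTop (𝓝 (f x')) := by

  obtain ⟨hθ0, hθ1⟩ := hθ
  -- all points of `Pn S x m` lie in `X`
  have hPX : ∀ m, ((Pn S x m : Finset (EuclideanSpace ℝ (Fin d))) : Set _) ⊆ X := by
    intro m y hy
    simp only [Pn, Finset.coe_union, Set.mem_union, Finset.coe_image, Set.mem_image] at hy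
    rcases hy with hy | ⟨k, _, rfl⟩
    · exact hS m hy
    · exact hxX k
  -- eventually the kernel weight is positive
  have hpos' : ∀ᶠ n in atTop, 0 < ksum K (x n) (Pn S x (n - 1)) (h (n - 1)) := by
    filter_upwards [hband, eventually_ge_atTop 2] with n hb hn2
    have hne : (Pn S x (n - 1)).Nonempty := by
      refine ⟨x 1, ?_⟩
      unfold Pn
      convert Finset.mem_union_right (S (n - 1)) ?_
      letI : DecidableEq (EuclideanSpace ℝ (Fin d)) := fun a b => Classical.propDecidable (a = b)
      exact Finset.mem_image.2 ⟨1, Finset.mem_Icc.2 ⟨le_refl 1, by omega⟩, rfl⟩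
    obtain ⟨y, hyP, hyd⟩ := (Pn S x (n - 1)).finite_toSet.isCompact.exists_infDist_eq_dist
      (by exact_mod_cast hne) (x n)
    have hdy : dist (x n) y ≤ θ * h (n - 1) := by rw [← hyd]; exact hb
    have hhp := hpos (n - 1)
    have hKy : 0 < K ((h (n - 1))⁻¹ • (x n - y)) := by
      apply hKpos
      rw [norm_smul, Real.norm_eq_abs, abs_of_pos (inv_pos.2 hhp)]
      rw [← dist_eq_norm]
      calc (h (n-1))⁻¹ * dist (x n) y ≤ (h (n-1))⁻¹ * (θ * h (n-1)) := by
            exact mul_le_mul_of_nonneg_left hdy (le_of_lt (inv_pos.2 hhp))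
        _ = θ := by field_simp
    refine Finset.sum_pos' (fun i _ => hKnonneg _) ⟨y, ?_, hKy⟩
    exact_mod_cast hyP
  refine ⟨hpos', ?_⟩
  rw [Metric.tendsto_nhds]
  intro ε hε
  obtain ⟨δ, hδ0, hδ⟩ := Metric.continuousWithinAt_iff.1 (hf x' hx') (ε/2) (by linarith)
  have hh' : Tendsto (fun n => h (n - 1)) atTop (𝓝 0) :=
    hh0.comp (tendsto_sub_atTop_nat 1)
  have hhsmall : ∀ᶠ n in atTop, h (n - 1) < δ/2 := by
    have := Metric.tendsto_nhds.1 hh' (δ/2) (by linarith)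
    filter_upwards [this] with n hn
    rw [Real.dist_eq, sub_zero, abs_of_pos (hpos _)] at hn
    exact hn
  have hxsmall : ∀ᶠ n in atTop, dist (x n) x' < δ/2 :=
    Metric.tendsto_nhds.1 hconv (δ/2) (by linarith)
  filter_upwards [hpos', hhsmall, hxsmall] with n hden hhn hxn
  set P := Pn S x (n - 1) with hP
  set hb := h (n - 1) with hhb
  set w : EuclideanSpace ℝ (Fin d) → ℝ := fun y => K (hb⁻¹ • (x n - y)) with hw
  have hdenpos : 0 < ∑ y ∈ P, w y := hden
  have hne : (∑ y ∈ P, w y) ≠ 0 := ne_of_gt hdenpos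
  -- pointwise bound on terms
  have hterm : ∀ y ∈ P, |w y * (f y - f x')| ≤ w y * (ε/2) := by
    intro y hy
    rcases eq_or_lt_of_le (hKnonneg (hb⁻¹ • (x n - y))) with h0 | hwy
    · have hz : w y = 0 := h0.symm
      rw [hz, zero_mul, abs_zero, zero_mul]
    · have hle : ‖hb⁻¹ • (x n - y)‖ ≤ 1 := by
        by_contra hc
        exact absurd (hKzero _ (lt_of_not_ge hc)) (ne_of_gt hwy)
      have hhp := hpos (n - 1)
      rw [norm_smul, Real.norm_eq_abs, abs_of_pos (inv_pos.2 hhp)] at hle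
      have hnorm : ‖x n - y‖ ≤ hb := by
        rw [inv_mul_le_iff₀ hhp, mul_one] at hle; exact hle
      have hdyx' : dist y x' < δ := by
        calc dist y x' ≤ dist y (x n) + dist (x n) x' := dist_triangle _ _ _
          _ < δ/2 + δ/2 := by
              apply add_lt_add_of_le_of_lt _ hxn
              rw [dist_comm, dist_eq_norm]
              exact le_of_lt (lt_of_le_of_lt hnorm hhn)
          _ = δ := by ring
      have hyX : y ∈ X := hPX _ hy
      have := hδ hyX hdyx'
      rw [Real.dist_eq] at this
      rw [abs_mul, abs_of_pos hwy]
      exact mul_le_mul_of_nonneg_left (le_of_lt this) (le_of_lt hwy)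
  have hsplit : ∑ y ∈ P, w y * (f y - f x') =
      (∑ y ∈ P, w y * f y) - f x' * ∑ y ∈ P, w y := by
    rw [Finset.mul_sum, ← Finset.sum_sub_distrib]
    exact Finset.sum_congr rfl fun y _ => by ring
  have hkey : |(∑ y ∈ P, w y * f y) - f x' * ∑ y ∈ P, w y| ≤ (ε/2) * ∑ y ∈ P, w y := by
    rw [← hsplit]
    calc |∑ y ∈ P, w y * (f y - f x')| ≤ ∑ y ∈ P, |w y * (f y - f x')| :=
          Finset.abs_sum_le_sum_abs _ _
      _ ≤ ∑ y ∈ P, w y * (ε/2) := Finset.sum_le_sum hterm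
      _ = (ε/2) * ∑ y ∈ P, w y := by rw [← Finset.sum_mul]; ring
  have hkreg : kreg f K (x n) P hb = (∑ y ∈ P, w y * f y) / ∑ y ∈ P, w y := by
    rw [kreg, if_pos hden]; rfl
  rw [hkreg, Real.dist_eq]
  have hdiff : (∑ y ∈ P, w y * f y) / (∑ y ∈ P, w y) - f x' =
      ((∑ y ∈ P, w y * f y) - f x' * ∑ y ∈ P, w y) / ∑ y ∈ P, w y := by
    field_simp
  rw [hdiff, abs_div, abs_of_pos hdenpos, div_lt_iff₀ hdenpos]
  calc |(∑ y ∈ P, w y * f y) - f x' * ∑ y ∈ P, w y| ≤ (ε/2) * ∑ y ∈ P, w y := hkey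
    _ < ε * ∑ y ∈ P, w y := by
        apply mul_lt_mul_of_pos_right _ hdenpos
        linarith
end

section
/- Let X ⊆ ℝ^d and let f : X → ℝ be continuous and bounded. Let (Ω, μ) be a probability space and let r : Ω × X → ℝ be a random prior field such that r(ω,·) is continuous for every ω and sup_{ω∈Ω, x∈X} |r(ω,x)| ≤ M for some M < ∞. Let (x_n) be a sequence in X converging to x' ∈ X and let (S_n) be a sequence of finite subsets of X. For each ω, let f̂_{r(ω),n}(x) = r(ω,x) + T̂(x; D'_{n}(ω)) be the randomized-prior surrogate, where T̂ is an inner regressor fitted to the adjusted data D'_{n}(ω) = {(y, f(y) − r(ω,y)) : y ∈ S_{n} ∪ {x_1,…,x_{n}}}. Assume that for every ω: (i) T̂(x_n; D'_{n−1}(ω)) → f(x') − r(ω,x') as n → ∞ (pathwise local consistency of the inner regressor for the shifted objective f − r(ω,·)), and (ii) sup_n |f̂_{r(ω),n}(x_n)| ≤ C for a constant C independent of ω. Then the randomized-prior mean predictor satisfies E_{ω∼μ}[f̂_{r(ω),n}(x_n)] → f(x') as n → ∞; that is, the mean of the randomized prior method is locally consistent for f. -/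
open Filter Metric Topology MeasureTheory
open scoped Classical

/-- The label-adjusted data `D'_n(ω) = {(y, f(y) − r(ω,y)) : y ∈ P_n}` of the randomized
prior method. -/
noncomputable def adjData {α Ω : Type*} (f : α → ℝ) (r : Ω → α → ℝ) (ω : Ω)
    (S : ℕ → Finset α) (x : ℕ → α) (n : ℕ) : Finset (α × ℝ) :=
  (Pn S x n).image fun y => (y, f y - r ω y)

/-- Local consistency of the mean of the randomized prior method:
under pathwise local consistency of the inner regressor for the shifted objectives and a
uniform bound, the expectation `E_ω[f̂_{r(ω),n}(x_n)]` converges to `f x'`. -/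
theorem randomized_prior_mean_locally_consistent {d : ℕ}
    (X : Set (EuclideanSpace ℝ (Fin d)))
    (f : EuclideanSpace ℝ (Fin d) → ℝ) (hf : ContinuousOn f X)
    (B : ℝ) (hfb : ∀ z ∈ X, |f z| ≤ B)
    (Ω : Type*) [MeasurableSpace Ω] (μ : Measure Ω) [IsProbabilityMeasure μ]
    (r : Ω → EuclideanSpace ℝ (Fin d) → ℝ)
    (hrc : ∀ ω, ContinuousOn (r ω) X)
    (M : ℝ) (hrb : ∀ ω, ∀ z ∈ X, |r ω z| ≤ M)
    (x : ℕ → EuclideanSpace ℝ (Fin d)) (hxX : ∀ n, x n ∈ X)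
    (x' : EuclideanSpace ℝ (Fin d)) (hx' : x' ∈ X)
    (hconv : Tendsto x atTop (𝓝 x'))
    (S : ℕ → Finset (EuclideanSpace ℝ (Fin d)))
    (hS : ∀ n, (S n : Set (EuclideanSpace ℝ (Fin d))) ⊆ X)
    (That : EuclideanSpace ℝ (Fin d) → Finset (EuclideanSpace ℝ (Fin d) × ℝ) → ℝ)
    (hinner : ∀ ω, Tendsto (fun n => That (x n) (adjData f r ω S x (n - 1)))
      atTop (𝓝 (f x' - r ω x')))
    (C : ℝ)
    (hbdd : ∀ ω n, |r ω (x n) + That (x n) (adjData f r ω S x (n - 1))| ≤ C)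
    (hmeas : ∀ n, AEStronglyMeasurable
      (fun ω => r ω (x n) + That (x n) (adjData f r ω S x (n - 1))) μ) :
    Tendsto (fun n => ∫ ω, (r ω (x n) + That (x n) (adjData f r ω S x (n - 1))) ∂μ)
      atTop (𝓝 (f x')) := by
  have hfx' : (f x') = ∫ _ω, f x' ∂μ := by simp
  rw [hfx']
  apply tendsto_integral_of_dominated_convergence (fun _ => C) hmeas
  · exact integrable_const C
  · intro n
    filter_upwards with ω
    simpa [Real.norm_eq_abs] using hbdd ω n
  · filter_upwards with ω
    have hrx : Tendsto (fun n => r ω (x n)) atTop (𝓝 (r ω x')) := by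
      have hx'' : Tendsto x atTop (𝓝[X] x') :=
        tendsto_nhdsWithin_of_tendsto_nhds_of_eventually_within _ hconv
          (Eventually.of_forall hxX)
      exact ((hrc ω x' hx').tendsto).comp hx''
    have := hrx.add (hinner ω)
    simpa using this
end

section
/- Let X ⊆ ℝ^d, let f : X → ℝ be continuous and bounded, and let K : ℝ^d → [0,∞) be a kernel with K(z) = 0 for ‖z‖ > 1 and K(z) > 0 for ‖z‖ ≤ θ for some fixed θ ∈ (0,1). Let (Ω, μ) be a probability space and r : Ω × X → ℝ a random prior field with r(ω,·) continuous for every ω, sup_{ω,x}|r(ω,x)| ≤ M < ∞, and pointwise positive variance Var_{ω∼μ}[r(·,x)] > 0 for every x ∈ X. For data points P ⊆ X and bandwidth h > 0, define the randomized-prior surrogate f̂_{r(ω)}(x; P, h) = r(ω,x) + (Σ_{y∈P} K_h(x,y)(f(y) − r(ω,y)))/(Σ_{y∈P} K_h(x,y)) when Σ_{y∈P} K_h(x,y) > 0, and f̂_{r(ω)}(x; P, h) = r(ω,x) otherwise, where K_h(x,y) = K((x−y)/h). Let (S_n) be finite subsets of X, let P_n = S_n ∪ {x_1,…,x_n} for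 a sequence (x_n) in X, and let bandwidths h_n > 0 satisfy h_n → 0. Then the variance UQ σ̂(x; ·)² = Var_{ω∼μ}[f̂_{r(ω)}(x; P_n, h_n)] satisfies the GNEB property: (1) for every x ∈ X with inf_n Δ(x, P_n) > 0, one has f̂_{r(ω)}(x; P_n, h_n) = r(ω,x) for all large n, hence liminf_n Var_{ω∼μ}[f̂_{r(ω)}(x; P_n, h_n)] = Var_{ω∼μ}[r(·,x)] > 0; and (2) if x_n → x' and additionally Δ(x_n, P_{n−1}) ≤ θ·h_{n−1} for all large n, then Var_{ω∼μ}[f̂_{r(ω)}(x_n; P_{n−1}, h_{n−1})] → 0 as n → ∞. -/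
open Filter Metric Topology MeasureTheory
open scoped Classical

lemma aux_var_add_const {Ω : Type*} [MeasurableSpace Ω] (μ : Measure Ω) [IsProbabilityMeasure μ]
    (X : Ω → ℝ) (hX : Integrable X μ) (c : ℝ) :
    ProbabilityTheory.variance (fun ω => X ω + c) μ = ProbabilityTheory.variance X μ := by
  have h1 : (∫ ω, (X ω + c) ∂μ) = (∫ ω, X ω ∂μ) + c := by
    rw [integral_add hX (integrable_const c), integral_const]; simp
  unfold ProbabilityTheory.variance ProbabilityTheory.evariance
  congr 1
  refine lintegral_congr fun ω => ?_
  rw [h1]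
  have : X ω + c - ((∫ ω, X ω ∂μ) + c) = X ω - ∫ ω, X ω ∂μ := by ring
  rw [this]

lemma aux_weighted_diff_bound {α : Type*} (P : Finset α) (w : α → ℝ) (hw : ∀ y ∈ P, 0 ≤ w y)
    (hspos : 0 < ∑ y ∈ P, w y) (a : ℝ) (b : α → ℝ) (ε : ℝ)
    (hb : ∀ y ∈ P, w y ≠ 0 → |a - b y| ≤ ε) :
    |a - (∑ y ∈ P, w y * b y) / (∑ y ∈ P, w y)| ≤ ε := by
  set s := ∑ y ∈ P, w y with hs
  have key : a - (∑ y ∈ P, w y * b y) / s = (∑ y ∈ P, w y * (a - b y)) / s := by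
    have h2 : ∑ y ∈ P, w y * (a - b y) = s * a - ∑ y ∈ P, w y * b y := by
      rw [hs, Finset.sum_mul]
      rw [← Finset.sum_sub_distrib]
      exact Finset.sum_congr rfl fun y _ => by ring
    rw [h2, eq_div_iff hspos.ne']
    field_simp
  rw [key, abs_div, abs_of_pos hspos, div_le_iff₀ hspos]
  calc |∑ y ∈ P, w y * (a - b y)| ≤ ∑ y ∈ P, |w y * (a - b y)| := Finset.abs_sum_le_sum_abs _ _
    _ ≤ ∑ y ∈ P, w y * ε := by
        refine Finset.sum_le_sum fun y hy => ?_
        rw [abs_mul, abs_of_nonneg (hw y hy)]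
        by_cases h0 : w y = 0
        · simp [h0]
        · exact mul_le_mul_of_nonneg_left (hb y hy h0) (hw y hy)
    _ = ε * s := by rw [← Finset.sum_mul]; ring

/-- Randomized-prior surrogate with kernel regression inner regressor fitted to the
label-adjusted data `{(y, f(y) − r(ω,y)) : y ∈ P}`; it equals the prior `r ω x` when the
total kernel weight vanishes. -/
noncomputable def rpSurr {d : ℕ} {Ω : Type*}
    (f K : EuclideanSpace ℝ (Fin d) → ℝ) (r : Ω → EuclideanSpace ℝ (Fin d) → ℝ) (ω : Ω)
    (x : EuclideanSpace ℝ (Fin d)) (P : Finset (EuclideanSpace ℝ (Fin d))) (h : ℝ) : ℝ :=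
  if 0 < ksum K x P h then
    r ω x + (∑ y ∈ P, K (h⁻¹ • (x - y)) * (f y - r ω y)) / ksum K x P h
  else r ω x

/-- GNEB property of the variance of the randomized prior method with
kernel regression inner regressor: the uncertainty stays positive at points bounded away
from the data, and vanishes along convergent query sequences. -/
theorem randomized_prior_variance_gneb {d : ℕ}
    (X : Set (EuclideanSpace ℝ (Fin d)))
    (f : EuclideanSpace ℝ (Fin d) → ℝ) (hf : ContinuousOn f X)
    (B : ℝ) (hfb : ∀ z ∈ X, |f z| ≤ B)
    (θ : ℝ) (hθ : θ ∈ Set.Ioo (0 : ℝ) 1)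
    (K : EuclideanSpace ℝ (Fin d) → ℝ)
    (hKnonneg : ∀ z, 0 ≤ K z)
    (hKzero : ∀ z, 1 < ‖z‖ → K z = 0)
    (hKpos : ∀ z, ‖z‖ ≤ θ → 0 < K z)
    (Ω : Type*) [MeasurableSpace Ω] (μ : Measure Ω) [IsProbabilityMeasure μ]
    (r : Ω → EuclideanSpace ℝ (Fin d) → ℝ)
    (hrc : ∀ ω, ContinuousOn (r ω) X)
    (M : ℝ) (hrb : ∀ ω, ∀ z ∈ X, |r ω z| ≤ M)
    (hrmeas : ∀ z ∈ X, Measurable fun ω => r ω z)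
    (hvar : ∀ z ∈ X, 0 < ProbabilityTheory.variance (fun ω => r ω z) μ)
    (x : ℕ → EuclideanSpace ℝ (Fin d)) (hxX : ∀ n, x n ∈ X)
    (S : ℕ → Finset (EuclideanSpace ℝ (Fin d)))
    (hS : ∀ n, (S n : Set (EuclideanSpace ℝ (Fin d))) ⊆ X)
    (h : ℕ → ℝ) (hpos : ∀ n, 0 < h n) (hh0 : Tendsto h atTop (𝓝 0)) :
    (∀ z ∈ X,
      (0 < ⨅ n, infDist z ((Pn S x n : Finset (EuclideanSpace ℝ (Fin d))) : Set _)) →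
      (∀ᶠ n in atTop, ∀ ω, rpSurr f K r ω z (Pn S x n) (h n) = r ω z) ∧
      liminf (fun n =>
          ProbabilityTheory.variance (fun ω => rpSurr f K r ω z (Pn S x n) (h n)) μ) atTop
        = ProbabilityTheory.variance (fun ω => r ω z) μ ∧
      0 < liminf (fun n =>
          ProbabilityTheory.variance (fun ω => rpSurr f K r ω z (Pn S x n) (h n)) μ) atTop) ∧
    (∀ x' ∈ X, Tendsto x atTop (𝓝 x') →
      (∀ᶠ n in atTop,
        infDist (x n) ((Pn S x (n - 1) : Finset (EuclideanSpace ℝ (Fin d))) : Set _) ≤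
          θ * h (n - 1)) →
      Tendsto (fun n =>
          ProbabilityTheory.variance
            (fun ω => rpSurr f K r ω (x n) (Pn S x (n - 1)) (h (n - 1))) μ)
        atTop (𝓝 0)) := by
  have hPX : ∀ n, ((Pn S x n : Finset (EuclideanSpace ℝ (Fin d))) : Set _) ⊆ X := by
    intro n y hy
    simp only [Pn, Finset.coe_union, Set.mem_union, Finset.coe_image, Set.mem_image,
      Finset.mem_coe, Finset.mem_Icc] at hy
    rcases hy with hy | ⟨i, _, rfl⟩
    · exact hS n hy
    · exact hxX i
  constructor
  · -- Part 1
    intro z hz hδ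
    set δ := ⨅ n, infDist z ((Pn S x n : Finset (EuclideanSpace ℝ (Fin d))) : Set _) with hδdef
    have hbdd : BddBelow (Set.range fun n =>
        infDist z ((Pn S x n : Finset (EuclideanSpace ℝ (Fin d))) : Set _)) :=
      ⟨0, by rintro _ ⟨n, rfl⟩; exact infDist_nonneg⟩
    have hev : ∀ᶠ n in atTop, ∀ ω, rpSurr f K r ω z (Pn S x n) (h n) = r ω z := by
      filter_upwards [hh0.eventually (gt_mem_nhds hδ)] with n hn ω
      have hks : ksum K z (Pn S x n) (h n) = 0 := by
        refine Finset.sum_eq_zero fun y hy => ?_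
        apply hKzero
        have hd : δ ≤ dist z y :=
          le_trans (ciInf_le hbdd n) (infDist_le_dist_of_mem (by exact_mod_cast hy))
        rw [norm_smul, norm_inv, Real.norm_eq_abs, abs_of_pos (hpos n), ← dist_eq_norm]
        rw [inv_mul_eq_div, lt_div_iff₀ (hpos n), one_mul]
        linarith
      simp [rpSurr, hks]
    refine ⟨hev, ?_, ?_⟩
    · have heq : ∀ᶠ n in atTop,
          ProbabilityTheory.variance (fun ω => rpSurr f K r ω z (Pn S x n) (h n)) μ
            = ProbabilityTheory.variance (fun ω => r ω z) μ :=
        hev.mono fun n hn => by rw [funext hn]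
      rw [liminf_congr heq, liminf_const]
    · have heq : ∀ᶠ n in atTop,
          ProbabilityTheory.variance (fun ω => rpSurr f K r ω z (Pn S x n) (h n)) μ
            = ProbabilityTheory.variance (fun ω => r ω z) μ :=
        hev.mono fun n hn => by rw [funext hn]
      rw [liminf_congr heq, liminf_const]
      exact hvar z hz
  · -- Part 2
    intro x' hx' hxx hevent
    set g : ℕ → Ω → ℝ := fun n ω =>
      r ω (x n) - (∑ y ∈ Pn S x (n-1), K ((h (n-1))⁻¹ • (x n - y)) * r ω y)
          / ksum K (x n) (Pn S x (n-1)) (h (n-1)) with hgdef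
    have hknn : ∀ n, ∀ y ∈ Pn S x (n-1), 0 ≤ K ((h (n-1))⁻¹ • (x n - y)) :=
      fun n y _ => hKnonneg _
    -- uniform bound
    have hgb : ∀ n ω, |g n ω| ≤ 2 * M := by
      intro n ω
      have hM : 0 ≤ M := le_trans (abs_nonneg _) (hrb ω (x n) (hxX n))
      by_cases hs : 0 < ksum K (x n) (Pn S x (n-1)) (h (n-1))
      · refine aux_weighted_diff_bound _ _ (hknn n) (by simpa [ksum] using hs) _ _ _ ?_
        intro y hy _
        calc |r ω (x n) - r ω y| ≤ |r ω (x n)| + |r ω y| := abs_sub _ _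
          _ ≤ M + M := add_le_add (hrb ω _ (hxX n)) (hrb ω _ (hPX _ (by exact_mod_cast hy)))
          _ = 2 * M := by ring
      · have h0 : ksum K (x n) (Pn S x (n-1)) (h (n-1)) = 0 :=
          le_antisymm (not_lt.1 hs) (Finset.sum_nonneg fun y _ => hKnonneg _)
        have hall : ∀ y ∈ Pn S x (n-1), K ((h (n-1))⁻¹ • (x n - y)) = 0 :=
          (Finset.sum_eq_zero_iff_of_nonneg (hknn n)).1 h0
        have : g n ω = r ω (x n) := by
          simp only [hgdef]
          rw [Finset.sum_eq_zero fun y hy => by rw [hall y hy, zero_mul]]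
          simp
        rw [this]
        calc |r ω (x n)| ≤ M := hrb ω _ (hxX n)
          _ ≤ 2 * M := by linarith
    -- measurability
    have hgm : ∀ n, Measurable (g n) := by
      intro n
      apply Measurable.sub (hrmeas _ (hxX n))
      apply Measurable.div_const
      exact Finset.measurable_sum _ fun y hy =>
        ((hrmeas y (hPX _ (by exact_mod_cast hy))).const_mul _)
    have hgint : ∀ n, Integrable (g n) μ := by
      intro n
      exact (integrable_const (2*M)).mono' (hgm n).aestronglyMeasurable
        (Eventually.of_forall fun ω => by rw [Real.norm_eq_abs]; exact hgb n ω)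
    -- eventual positivity of ksum
    have hsub : Tendsto (fun n => h (n-1)) atTop (𝓝 0) := hh0.comp (tendsto_sub_atTop_nat 1)
    have hspos : ∀ᶠ n in atTop, 0 < ksum K (x n) (Pn S x (n-1)) (h (n-1)) := by
      filter_upwards [hevent, eventually_ge_atTop 2] with n h1 h2
      have hmem : x 1 ∈ Pn S x (n-1) := by
        simp only [Pn, Finset.mem_union, Finset.mem_image, Finset.mem_Icc]
        exact Or.inr ⟨1, ⟨le_refl 1, by omega⟩, rfl⟩
      have hne : ((Pn S x (n-1) : Finset (EuclideanSpace ℝ (Fin d))) : Set _).Nonempty :=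
        ⟨x 1, by exact_mod_cast hmem⟩
      obtain ⟨y, hy, hyd⟩ := ((Pn S x (n-1)).finite_toSet.isCompact).exists_infDist_eq_dist
        hne (x n)
      have hdist : dist (x n) y ≤ θ * h (n-1) := by rw [← hyd]; exact h1
      have hKy : 0 < K ((h (n-1))⁻¹ • (x n - y)) := by
        apply hKpos
        rw [norm_smul, norm_inv, Real.norm_eq_abs, abs_of_pos (hpos (n-1)), ← dist_eq_norm]
        rw [inv_mul_eq_div, div_le_iff₀ (hpos (n-1))]
        linarith
      exact Finset.sum_pos' (hknn n) ⟨y, by exact_mod_cast hy, hKy⟩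
    -- pointwise convergence of g to 0
    have hg0 : ∀ ω, Tendsto (fun n => g n ω) atTop (𝓝 0) := by
      intro ω
      rw [Metric.tendsto_nhds]
      intro ε hε
      obtain ⟨δ, hδpos, hδ⟩ := Metric.continuousWithinAt_iff.1 (hrc ω x' hx') (ε/3)
        (by linarith)
      have F1 : ∀ᶠ n in atTop, dist (x n) x' < δ/2 :=
        (Metric.tendsto_nhds.1 hxx) (δ/2) (by linarith)
      have F2 : ∀ᶠ n in atTop, h (n-1) < δ/2 :=
        hsub.eventually (gt_mem_nhds (by linarith : (0:ℝ) < δ/2))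
      filter_upwards [F1, F2, hspos] with n h1 h2 h3
      rw [Real.dist_0_eq_abs]
      have hb : |g n ω| ≤ 2 * (ε/3) := by
        refine aux_weighted_diff_bound _ _ (hknn n) (by simpa [ksum] using h3) _ _ _ ?_
        intro y hy hKy
        have hyX : y ∈ X := hPX _ (by exact_mod_cast hy)
        have hdy : dist (x n) y ≤ h (n-1) := by
          by_contra hc
          push_neg at hc
          apply hKy
          apply hKzero
          rw [norm_smul, norm_inv, Real.norm_eq_abs, abs_of_pos (hpos (n-1)), ← dist_eq_norm]
          rw [inv_mul_eq_div, lt_div_iff₀ (hpos (n-1)), one_mul]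
          exact hc
        have hyx' : dist y x' < δ := by
          calc dist y x' ≤ dist y (x n) + dist (x n) x' := dist_triangle _ _ _
            _ < h (n-1) + δ/2 := by rw [dist_comm]; exact add_lt_add_of_le_of_lt hdy h1
            _ < δ := by linarith
        have e1 : |r ω (x n) - r ω x'| < ε/3 := by
          have := hδ (hxX n) (lt_trans h1 (by linarith))
          rwa [Real.dist_eq] at this
        have e2 : |r ω y - r ω x'| < ε/3 := by
          have := hδ hyX hyx'
          rwa [Real.dist_eq] at this
        calc |r ω (x n) - r ω y|
            = |(r ω (x n) - r ω x') - (r ω y - r ω x')| := by ring_nf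
          _ ≤ |r ω (x n) - r ω x'| + |r ω y - r ω x'| := abs_sub _ _
          _ ≤ 2 * (ε/3) := by linarith
      linarith
    -- variance equality and bound
    have hveq : ∀ᶠ n in atTop,
        ProbabilityTheory.variance
          (fun ω => rpSurr f K r ω (x n) (Pn S x (n-1)) (h (n-1))) μ
          = ProbabilityTheory.variance (g n) μ := by
      filter_upwards [hspos] with n hs
      have hfun : (fun ω => rpSurr f K r ω (x n) (Pn S x (n-1)) (h (n-1)))
          = fun ω => g n ω + (∑ y ∈ Pn S x (n-1), K ((h (n-1))⁻¹ • (x n - y)) * f y)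
              / ksum K (x n) (Pn S x (n-1)) (h (n-1)) := by
        funext ω
        simp only [rpSurr, if_pos hs, hgdef]
        rw [show (∑ y ∈ Pn S x (n-1), K ((h (n-1))⁻¹ • (x n - y)) * (f y - r ω y))
            = (∑ y ∈ Pn S x (n-1), K ((h (n-1))⁻¹ • (x n - y)) * f y)
              - ∑ y ∈ Pn S x (n-1), K ((h (n-1))⁻¹ • (x n - y)) * r ω y by
          rw [← Finset.sum_sub_distrib]; exact Finset.sum_congr rfl fun y _ => by ring]
        rw [sub_div]
        ring
      rw [hfun, aux_var_add_const μ (g n) (hgint n)]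
    -- DCT
    have hDCT : Tendsto (fun n => ∫ ω, (g n ω)^2 ∂μ) atTop (𝓝 0) := by
      have := tendsto_integral_of_dominated_convergence (μ := μ) (fun _ : Ω => (2*M)^2)
        (F := fun n ω => (g n ω)^2) (f := fun _ : Ω => (0:ℝ))
        (fun n => ((hgm n).pow_const 2).aestronglyMeasurable)
        (integrable_const _)
        (fun n => Eventually.of_forall fun ω => by
          rw [Real.norm_eq_abs, abs_pow]
          exact pow_le_pow_left₀ (abs_nonneg _) (hgb n ω) 2)
        (Eventually.of_forall fun ω => by simpa using (hg0 ω).pow 2)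
      simpa using this
    -- conclude
    refine squeeze_zero' (Eventually.of_forall fun n => ProbabilityTheory.variance_nonneg _ _)
      ?_ hDCT
    filter_upwards [hveq] with n hn
    rw [hn]
    have := ProbabilityTheory.variance_le_expectation_sq (μ := μ) (hgm n).aestronglyMeasurable
    simpa [Pi.pow_apply] using this
end

section
/- Fix τ > 0 and let Φ denote the cumulative distribution function of the standard normal distribution N(0,1). Define, for p ∈ ℝ and σ ≥ 0, the probability-of-improvement acquisition g(p, σ) = Φ((p − τ)/σ) if σ > 0, and g(p, σ) = 1{p − τ > 0} if σ = 0. Then: (1) for all real sequences (p_n) and nonnegative sequences (σ_n), if limsup_n p_n ≤ 0 and σ_n → 0 then g(p_n, σ_n) → 0; and (2) if liminf_n p_n > −∞ and liminf_n σ_n > 0 then liminf_n g(p_n, σ_n) > 0. -/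
open Filter Metric Topology MeasureTheory
open scoped Classical

/-- The probability density function of the standard normal distribution. -/
noncomputable def stdPdf (t : ℝ) : ℝ :=
  (Real.sqrt (2 * Real.pi))⁻¹ * Real.exp (-(t ^ 2) / 2)

/-- The cumulative distribution function of the standard normal distribution. -/
noncomputable def stdCdf (t : ℝ) : ℝ := ∫ s in Set.Iic t, stdPdf s

/-- Probability-of-improvement acquisition with tolerance `τ`. -/
noncomputable def piAcq (τ p σ : ℝ) : ℝ :=
  if 0 < σ then stdCdf ((p - τ) / σ) else if 0 < p - τ then 1 else 0

lemma stdPdf_pos (t : ℝ) : 0 < stdPdf t := by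
  have h : 0 < Real.sqrt (2 * Real.pi) := Real.sqrt_pos.2 (by positivity)
  exact mul_pos (inv_pos.2 h) (Real.exp_pos _)

lemma integrable_stdPdf : Integrable stdPdf := by
  have h : Integrable (fun t : ℝ => Real.exp (-(1/2 : ℝ) * t ^ 2)) :=
    integrable_exp_neg_mul_sq (by norm_num)
  have := h.const_mul (Real.sqrt (2 * Real.pi))⁻¹
  refine this.congr (Eventually.of_forall fun t => ?_)
  unfold stdPdf; ring_nf

lemma stdCdf_nonneg (t : ℝ) : 0 ≤ stdCdf t :=
  setIntegral_nonneg measurableSet_Iic fun s _ => (stdPdf_pos s).le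

lemma stdCdf_mono : Monotone stdCdf := fun a b hab =>
  setIntegral_mono_set integrable_stdPdf.integrableOn
    (Eventually.of_forall fun s => (stdPdf_pos s).le)
    (HasSubset.Subset.eventuallyLE (Set.Iic_subset_Iic.2 hab))

lemma stdCdf_pos (t : ℝ) : 0 < stdCdf t := by
  rw [stdCdf, setIntegral_pos_iff_support_of_nonneg_ae
    (Eventually.of_forall fun s => (stdPdf_pos s).le) integrable_stdPdf.integrableOn]
  have : Function.support stdPdf = Set.univ := by
    ext s; simp [Function.support, (stdPdf_pos s).ne']
  rw [this, Set.univ_inter]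
  simp [Real.volume_Iic]

lemma stdCdf_tendsto_atBot : Tendsto stdCdf atBot (𝓝 0) := by
  have key : Tendsto (fun n : ℕ => stdCdf (-(n : ℝ))) atTop (𝓝 0) := by
    have h := tendsto_setIntegral_of_antitone (μ := volume) (f := stdPdf)
      (s := fun n : ℕ => Set.Iic (-(n : ℝ))) (fun n => measurableSet_Iic)
      (fun a b hab => Set.Iic_subset_Iic.2 (by exact_mod_cast neg_le_neg (by exact_mod_cast hab)))
      ⟨0, integrable_stdPdf.integrableOn⟩
    have hempty : (⋂ n : ℕ, Set.Iic (-(n : ℝ))) = ∅ := by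
      ext x; simp only [Set.mem_iInter, Set.mem_Iic, Set.mem_empty_iff_false, iff_false, not_forall,
        not_le]
      obtain ⟨n, hn⟩ := exists_nat_gt (-x)
      exact ⟨n, by linarith⟩
    rwa [hempty, MeasureTheory.setIntegral_empty] at h
  rw [Metric.tendsto_nhds] at key ⊢
  intro ε hε
  obtain ⟨N, hN⟩ := (Filter.eventually_atTop).1 (key ε hε)
  rw [Filter.eventually_atBot]
  refine ⟨-(N : ℝ), fun t ht => ?_⟩
  have h1 : stdCdf t ≤ stdCdf (-(N : ℝ)) := stdCdf_mono ht
  have h2 := hN N le_rfl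
  rw [Real.dist_eq, sub_zero] at h2 ⊢
  rw [abs_of_nonneg (stdCdf_nonneg _)] at h2 ⊢
  linarith [stdCdf_nonneg t]

/-- Improvement property of the probability-of-improvement acquisition
function, for tolerance `τ > 0`: it vanishes along sequences with no eventual improvement
(`limsup p_n ≤ 0`) and vanishing uncertainty, and has positive liminf whenever
`liminf p_n > −∞` and `liminf σ_n > 0`. -/
theorem pi_improvement (τ : ℝ) (hτ : 0 < τ) :
    (∀ p q : ℕ → ℝ, (∀ n, 0 ≤ q n) → (∀ ε > 0, ∀ᶠ n in atTop, p n ≤ ε) →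
      Tendsto q atTop (𝓝 0) → Tendsto (fun n => piAcq τ (p n) (q n)) atTop (𝓝 0)) ∧
    (∀ p q : ℕ → ℝ, (∀ n, 0 ≤ q n) → (∃ c, ∀ᶠ n in atTop, c ≤ p n) →
      (∃ c > 0, ∀ᶠ n in atTop, c ≤ q n) →
      ∃ c > 0, ∀ᶠ n in atTop, c ≤ piAcq τ (p n) (q n)) := by
  constructor
  · intro p q hq hp hq0
    rw [Metric.tendsto_nhds] at hq0 ⊢
    intro ε hε
    -- get M with stdCdf t < ε for t ≤ M
    obtain ⟨M, hM⟩ := Filter.eventually_atBot.1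
      ((Metric.tendsto_nhds.1 stdCdf_tendsto_atBot) ε hε)
    -- wlog M < 0
    set M' : ℝ := min M (-1) with hM'def
    have hM'neg : M' < 0 := lt_of_le_of_lt (min_le_right _ _) (by norm_num)
    have hM' : ∀ t ≤ M', stdCdf t < ε := fun t ht => by
      have := hM t (le_trans ht (min_le_left _ _))
      rwa [Real.dist_eq, sub_zero, abs_of_nonneg (stdCdf_nonneg _)] at this
    set δ : ℝ := (τ / 2) / (-M') with hδdef
    have hδpos : 0 < δ := div_pos (by linarith) (by linarith)
    filter_upwards [hp (τ / 2) (by linarith), hq0 δ hδpos] with n hpn hqn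
    rw [Real.dist_eq, sub_zero, abs_of_nonneg (hq n)] at hqn
    rw [Real.dist_eq, sub_zero]
    rcases lt_or_eq_of_le (hq n) with hqpos | hq0'
    · have hratio : (p n - τ) / q n ≤ M' := by
        rw [div_le_iff₀ hqpos]
        have h1 : M' * δ ≤ M' * q n := mul_le_mul_of_nonpos_left hqn.le hM'neg.le
        have h2 : M' * δ = -(τ / 2) := by
          rw [hδdef, ← mul_div_assoc, div_eq_iff (by linarith : (-M') ≠ 0)]; ring
        nlinarith
      have : piAcq τ (p n) (q n) = stdCdf ((p n - τ) / q n) := if_pos hqpos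
      rw [this, abs_of_nonneg (stdCdf_nonneg _)]
      exact lt_of_le_of_lt (stdCdf_mono hratio) (hM' M' le_rfl)
    · have : piAcq τ (p n) (q n) = 0 := by
        rw [piAcq, if_neg (by rw [← hq0']; exact lt_irrefl 0), if_neg (by push_neg; linarith)]
      rw [this, abs_zero]; exact hε
  · intro p q hq ⟨c', hp⟩ ⟨c, hc, hqc⟩
    set M : ℝ := min (c' - τ) 0 with hMdef
    have hMnonpos : M ≤ 0 := min_le_right _ _
    refine ⟨stdCdf (M / c), stdCdf_pos _, ?_⟩
    filter_upwards [hp, hqc] with n hpn hqn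
    have hqpos : 0 < q n := lt_of_lt_of_le hc hqn
    have : piAcq τ (p n) (q n) = stdCdf ((p n - τ) / q n) := if_pos hqpos
    rw [this]
    refine stdCdf_mono ?_
    have hM : M ≤ p n - τ := le_trans (min_le_left _ _) (by linarith)
    rcases le_or_gt 0 (p n - τ) with h0 | h0
    · exact le_trans (div_nonpos_of_nonpos_of_nonneg hMnonpos hc.le)
        (div_nonneg h0 hqpos.le)
    · have step1 : M / c ≤ (p n - τ) / c := by gcongr
      have step2 : (p n - τ) / c ≤ (p n - τ) / q n := by
        rw [div_le_div_iff₀ hc hqpos]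
        exact mul_le_mul_of_nonpos_left hqn h0.le
      linarith
end

section
/- For i = 1,…,u let X^{(i)} ⊆ ℝ^{d_i}, let f_i : X^{(i)} → ℝ, and let σ̂_i be an uncertainty quantifier on X^{(i)} satisfying the GNEB property with respect to f_i. On the product space X = X^{(1)} × … × X^{(u)}, define the composite uncertainty quantifier σ̂(x^{(1)},…,x^{(u)}; ·) = max_{1≤i≤u} σ̂_i(x^{(i)}; ·), where each σ̂_i is computed from the coordinatewise data. Then: (1) for every x̃ = (x^{(1)},…,x^{(u)}) ∈ X, every sequence x̃_n in X and every sequences of finite sets S_n^{(i)} ⊆ X^{(i)}, if inf_n Δ(x^{(i)}, S_n^{(i)} ∪ {x_1^{(i)},…,x_n^{(i)}}) > 0 for some coordinate i, then liminf_n max_j σ̂_j(x^{(j)}; E_{f_j}(S_n^{(j)}) ∪ D_n^{(j)}) > 0; and (2) for every convergent sequence x̃_n → x̃' in X and every sequences of finite sets S_n^{(i)} ⊆ X^{(i)}, max_i σ̂_i(x_n^{(i)}; E_{f_i}(S_{n−1}^{(i)}) ∪ D_{n−1}^{(i)}) → 0 as n → ∞. -/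
open Filter Metric Topology
open scoped Classical

/-- Generalized no-empty-ball property of an uncertainty quantifier relative to `X`, `f`. -/
def GNEB {α : Type*} [PseudoMetricSpace α] (X : Set α) (f : α → ℝ)
    (σhat : α → Finset (α × ℝ) → ℝ) : Prop :=
  (∀ z ∈ X, ∀ y : ℕ → α, (∀ n, y n ∈ X) →
    ∀ S : ℕ → Finset α, (∀ n, (S n : Set α) ⊆ X) →
    0 < ⨅ n, infDist z ((S n : Set α) ∪ y '' Set.Icc 1 n) →
    ∃ c > 0, ∀ᶠ n in atTop, c ≤ σhat z (Efun f (S n) ∪ Dfun f y n)) ∧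
  (∀ y : ℕ → α, (∀ n, y n ∈ X) → ∀ x' ∈ X, Tendsto y atTop (𝓝 x') →
    ∀ S : ℕ → Finset α, (∀ n, (S n : Set α) ⊆ X) →
    Tendsto (fun n => σhat (y n) (Efun f (S (n - 1)) ∪ Dfun f y (n - 1))) atTop (𝓝 0))

/-- GNEB property of the composite (maximum) uncertainty quantifier on
a product space: if each coordinatewise uncertainty quantifier satisfies the GNEB
property, then `max_i σ̂_i` has positive liminf whenever some coordinate stays at positive
distance from its data, and vanishes along convergent query sequences. -/
theorem composite_uq_gneb (u : ℕ) (dims : Fin u → ℕ)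
    (X : ∀ i, Set (EuclideanSpace ℝ (Fin (dims i))))
    (f : ∀ i, EuclideanSpace ℝ (Fin (dims i)) → ℝ)
    (σhat : ∀ i, EuclideanSpace ℝ (Fin (dims i)) →
      Finset (EuclideanSpace ℝ (Fin (dims i)) × ℝ) → ℝ)
    (hGNEB : ∀ i, GNEB (X i) (f i) (σhat i)) :
    (∀ z : ∀ i, EuclideanSpace ℝ (Fin (dims i)), (∀ i, z i ∈ X i) →
      ∀ x : ℕ → ∀ i, EuclideanSpace ℝ (Fin (dims i)), (∀ n i, x n i ∈ X i) →
      ∀ S : ∀ i, ℕ → Finset (EuclideanSpace ℝ (Fin (dims i))),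
        (∀ i n, ((S i n : Finset (EuclideanSpace ℝ (Fin (dims i)))) : Set _) ⊆ X i) →
      (∃ i, 0 < ⨅ n, Metric.infDist (z i)
        (((S i n : Finset (EuclideanSpace ℝ (Fin (dims i)))) : Set _) ∪
          (fun m => x m i) '' Set.Icc 1 n)) →
      ∃ c > 0, ∀ᶠ n in atTop,
        c ≤ ⨆ j, σhat j (z j) (Efun (f j) (S j n) ∪ Dfun (f j) (fun m => x m j) n)) ∧
    (∀ x : ℕ → ∀ i, EuclideanSpace ℝ (Fin (dims i)), (∀ n i, x n i ∈ X i) →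
      ∀ x' : ∀ i, EuclideanSpace ℝ (Fin (dims i)), (∀ i, x' i ∈ X i) →
      Tendsto x atTop (𝓝 x') →
      ∀ S : ∀ i, ℕ → Finset (EuclideanSpace ℝ (Fin (dims i))),
        (∀ i n, ((S i n : Finset (EuclideanSpace ℝ (Fin (dims i)))) : Set _) ⊆ X i) →
      Tendsto (fun n => ⨆ i, σhat i (x n i)
          (Efun (f i) (S i (n - 1)) ∪ Dfun (f i) (fun m => x m i) (n - 1)))
        atTop (𝓝 0)) := by
  constructor
  · intro z hz x hx S hS ⟨i, hi⟩
    obtain ⟨c, hc, hev⟩ := (hGNEB i).1 (z i) (hz i) (fun m => x m i) (fun n => hx n i)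
      (S i) (hS i) hi
    refine ⟨c, hc, hev.mono fun n hn => hn.trans ?_⟩
    convert le_ciSup (f := fun j => σhat j (z j) (Efun (f j) (S j n) ∪ Dfun (f j) (fun m => x m j) n))
      (Set.Finite.bddAbove (Set.finite_range _)) i
  · intro x hx x' hx' hxx' S hS
    suffices h : Tendsto (fun n => ⨆ i, σhat i (x n i)
        (Efun (f i) (S i (n - 1)) ∪ Dfun (f i) (fun m => x m i) (n - 1))) atTop (𝓝 0) by
      convert h
    set g : Fin u → ℕ → ℝ := fun i n =>
      σhat i (x n i) (Efun (f i) (S i (n - 1)) ∪ Dfun (f i) (fun m => x m i) (n - 1))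
      with hg
    have hgi : ∀ i, Tendsto (fun n => g i n) atTop (𝓝 0) := fun i => by
      convert (hGNEB i).2 (fun m => x m i) (fun n => hx n i) (x' i) (hx' i)
        (tendsto_pi_nhds.1 hxx' i) (S i) (hS i)
    rcases Nat.eq_zero_or_pos u with hu | hu
    · have : ∀ n, (⨆ i, g i n) = 0 := by
        intro n
        have : IsEmpty (Fin u) := by subst hu; infer_instance
        simp [iSup_of_empty', Real.sSup_empty]
      refine tendsto_const_nhds.congr fun n => ?_
      convert (this n).symm
    · have hne : Nonempty (Fin u) := ⟨⟨0, hu⟩⟩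
      have hsum : Tendsto (fun n => ∑ i, |g i n|) atTop (𝓝 0) := by
        have : Tendsto (fun n => ∑ i : Fin u, |g i n|) atTop (𝓝 (∑ i : Fin u, (0:ℝ))) :=
          tendsto_finset_sum _ fun i _ => by simpa using (hgi i).abs
        simpa using this
      refine tendsto_of_tendsto_of_tendsto_of_le_of_le (by simpa using hsum.neg) hsum ?_ ?_
      · intro n
        obtain ⟨i⟩ := hne
        have h1 : -(∑ j, |g j n|) ≤ g i n := by
          have h2 : |g i n| ≤ ∑ j, |g j n| :=
            Finset.single_le_sum (f := fun j => |g j n|) (fun j _ => abs_nonneg _)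
              (Finset.mem_univ i)
          calc -(∑ j, |g j n|) ≤ -|g i n| := neg_le_neg h2
            _ ≤ g i n := neg_abs_le _
        exact h1.trans (le_ciSup (f := fun j => g j n)
          (Set.Finite.bddAbove (Set.finite_range _)) i)
      · intro n
        refine ciSup_le fun i => (le_abs_self (g i n)).trans ?_
        exact Finset.single_le_sum (f := fun j => |g j n|) (fun j _ => abs_nonneg _)
          (Finset.mem_univ i)
end
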